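/- Let T = σ * θ̊ * τ̇ be a Morse tile, written in its unique decomposition as the join of a closed simplex σ, an open simplex θ̊ and a closed simplex τ of non-vanishing dimension deprived of its empty face, and assume T is not reduced to τ̇. Then sd(T) = ⋃_v st_{sd(T)}(v̂), where the union is taken over all vertices v of the underlying simplex σ * θ * τ. -/

import Mathlib

/-!
Common combinatorial framework for Morse shellings of simplicial complexes,
following J.-Y. Welschinger, "Morse shellings out of discrete Morse functions".
-/

namespace MorseShelling

variable {V : Type*} [DecidableEq V] {W : Type*} [DecidableEq W]

/-- A (finite, combinatorial) simplicial complex: a downward-closed collection of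
finite subsets (simplices) of the vertex type. -/
def IsComplex (K : Finset (Finset V)) : Prop :=
  ∀ σ ∈ K, ∀ τ ⊆ σ, τ ∈ K

/-- A relative simplicial complex `S = K \ L`, recorded as the pair `(K, L)`. -/
structure RelCplx (V : Type*) where
  K : Finset (Finset V)
  L : Finset (Finset V)

/-- The faces of a relative simplicial complex. -/
def RelCplx.faces (S : RelCplx V) : Finset (Finset V) := S.K \ S.L

/-- Validity of a relative simplicial complex: both members are complexes and
`L` is a subcomplex of `K`. -/
def RelCplx.IsValid (S : RelCplx V) : Prop :=
  IsComplex S.K ∧ IsComplex S.L ∧ S.L ⊆ S.K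

/-- Join of two collections of faces (on disjoint vertex supports). -/
def joinF (K₁ K₂ : Finset (Finset V)) : Finset (Finset V) :=
  (K₁ ×ˢ K₂).image fun p => p.1 ∪ p.2

/-- Join of two relative simplicial complexes:
`(K₁ * K₂) \ ((L₁ * K₂) ∪ (K₁ * L₂))`. -/
def RelCplx.join (S₁ S₂ : RelCplx V) : RelCplx V :=
  ⟨joinF S₁.K S₂.K, joinF S₁.L S₂.K ∪ joinF S₁.K S₂.L⟩

/-- The star of a simplex `σ` in `K` : all faces `τ` with `σ ∪ τ ∈ K`. -/
def star (K : Finset (Finset V)) (σ : Finset V) : Finset (Finset V) :=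
  K.filter fun τ => σ ∪ τ ∈ K

/-- The link of a simplex `σ` in `K` : all faces `τ` of the star disjoint from `σ`. -/
def link (K : Finset (Finset V)) (σ : Finset V) : Finset (Finset V) :=
  K.filter fun τ => σ ∪ τ ∈ K ∧ σ ∩ τ = ∅

/-- The star of a simplex in a relative complex, `st_S(σ) = st_K(σ) \ st_L(σ)`. -/
def RelCplx.starR (S : RelCplx V) (σ : Finset V) : RelCplx V :=
  ⟨star S.K σ, star S.L σ⟩

/-- The link of a simplex in a relative complex, `lk_S(σ) = lk_K(σ) \ lk_L(σ)`. -/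
def RelCplx.linkR (S : RelCplx V) (σ : Finset V) : RelCplx V :=
  ⟨link S.K σ, link S.L σ⟩

/-- The boundary complex of a simplex: all its proper faces (including `∅`). -/
def boundary (σ : Finset V) : Finset (Finset V) := σ.powerset.erase σ

/-- First barycentric subdivision: the faces are the (possibly empty) flags
`∅ ≠ σ₀ ⊊ σ₁ ⊊ ... ⊊ σ_q` of nonempty faces of `K`, a nonempty face `σ` of `K`
becoming the vertex `σ̂ = σ`. By convention `sd ∅ = ∅`. -/
def sd (K : Finset (Finset V)) : Finset (Finset (Finset V)) :=
  if K = ∅ then ∅ else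
    (K.erase ∅).powerset.filter fun c => ∀ a ∈ c, ∀ b ∈ c, a ⊆ b ∨ b ⊆ a

/-- First barycentric subdivision of a relative complex: `sd (K \ L) = sd K \ sd L`. -/
def RelCplx.sdR (S : RelCplx V) : RelCplx (Finset V) := ⟨sd S.K, sd S.L⟩

/-- An (absolute) simplicial complex seen as a relative one. -/
def toRel (K : Finset (Finset V)) : RelCplx V := ⟨K, ∅⟩

/-- The vertex support of a relative complex. -/
def suppK (S : RelCplx V) : Finset V := S.K.sup id

/-- The ridges (codimension one faces) of a simplex. -/
def ridges (σ : Finset V) : Finset (Finset V) := σ.image fun v => σ.erase v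

/-- The subcomplex of the simplex `σ` consisting of the faces contained in some
member of `R`. -/
def below (σ : Finset V) (R : Finset (Finset V)) : Finset (Finset V) :=
  σ.powerset.filter fun τ => ∃ ρ ∈ R, τ ⊆ ρ

/-- The restriction set of the basic tile `σ \ R`: the face spanned by the
vertices opposite to the missing ridges `R`. -/
def restSet (σ : Finset V) (R : Finset (Finset V)) : Finset V :=
  σ.filter fun v => σ.erase v ∈ R

/-- A basic tile of dimension `n` and order `k`: an `n`-simplex deprived of `k`
of its ridges (together with all the faces contained in them). -/
def IsBasicTile (S : RelCplx V) (n k : ℕ) : Prop :=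
  ∃ σ : Finset V, σ.card = n + 1 ∧ S.K = σ.powerset ∧
    ∃ R ⊆ ridges σ, R.card = k ∧ S.L = below σ R

/-- A Morse tile of dimension `n` and order `k`: a basic tile, possibly further
deprived of a unique face of higher codimension (its Morse face). -/
def IsMorseTile (S : RelCplx V) (n k : ℕ) : Prop :=
  ∃ σ : Finset V, σ.card = n + 1 ∧ S.K = σ.powerset ∧
    ∃ R ⊆ ridges σ, R.card = k ∧
      (S.L = below σ R ∨
        ∃ μ ⊆ σ, μ ∉ below σ R ∧ μ.card + 2 ≤ σ.card ∧
          S.L = below σ R ∪ below σ {μ})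

/-- A critical tile of dimension `n` and index `k`: either a closed simplex
(index `0`), or a basic tile of order `k` deprived of its restriction set
(this includes the dotted simplex for `k = 0` and the open simplex for `k = n`). -/
def IsCriticalTile (S : RelCplx V) (n k : ℕ) : Prop :=
  ∃ σ : Finset V, σ.card = n + 1 ∧ S.K = σ.powerset ∧
    ((k = 0 ∧ S.L = ∅) ∨
      (k ≤ n ∧ ∃ R ⊆ ridges σ, R.card = k ∧
        S.L = below σ R ∪ below σ {restSet σ R}))

/-- A closed simplex, as a tile. -/
def IsClosedSimplexTile (S : RelCplx V) : Prop :=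
  ∃ σ : Finset V, S.K = σ.powerset ∧ S.L = ∅

/-- An open simplex, as a tile: deprived of its whole boundary, incl. the empty face. -/
def IsOpenSimplexTile (S : RelCplx V) : Prop :=
  ∃ σ : Finset V, σ ≠ ∅ ∧ S.K = σ.powerset ∧ S.L = σ.powerset.erase σ

/-- The closed simplex on vertex set `σ`, as a relative complex. -/
def closedT (σ : Finset V) : RelCplx V := ⟨σ.powerset, ∅⟩

/-- The open simplex on vertex set `σ`. -/
def openT (σ : Finset V) : RelCplx V := ⟨σ.powerset, σ.powerset.erase σ⟩

/-- The closed simplex deprived of its empty face, `σ̇` (the neutral tile when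
`σ = ∅`, so that empty factors may be dropped from joins). -/
def dotT (σ : Finset V) : RelCplx V := ⟨σ.powerset, if σ = ∅ then ∅ else {∅}⟩

/-- The Morse tile `σ * θ̊ * τ̇`. -/
def splitTile (σ θ τ : Finset V) : RelCplx V :=
  (closedT σ).join ((openT θ).join (dotT τ))

/-- A tiling of a relative simplicial complex by `N` relative facets: the tiles
are relative simplices whose underlying simplices are facets, and their faces
partition the faces of `S`. -/
structure Tiling (S : RelCplx W) (N : ℕ) where
  tile : Fin N → RelCplx W
  isFacet : ∀ i, ∃ σ ∈ S.K, (∀ τ ∈ S.K, σ ⊆ τ → τ = σ) ∧ (tile i).K = σ.powerset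
  subL : ∀ i, (tile i).L ⊆ (tile i).K
  disj : ∀ i j, i ≠ j → Disjoint (tile i).faces (tile j).faces
  cover : (Finset.univ : Finset (Fin N)).biUnion (fun i => (tile i).faces) = S.faces

/-- The union of the faces of the first `p` tiles of a tiling. -/
def Tiling.prefixFaces {S : RelCplx W} {N : ℕ} (T : Tiling S N) (p : ℕ) :
    Finset (Finset W) :=
  (Finset.univ.filter fun i : Fin N => (i : ℕ) < p).biUnion fun i => (T.tile i).faces

/-- A tiling is a shelling when each of the sets of faces of `S_p = K_p \ L`
is a relative subcomplex, i.e. `L ∪ (tiles of index < p)` is a complex. -/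
def Tiling.IsShelling {S : RelCplx W} {N : ℕ} (T : Tiling S N) : Prop :=
  ∀ p ≤ N, IsComplex (S.L ∪ T.prefixFaces p)

/-- A (shelled) tiling begins with a set `F` of faces when some initial segment
of its tiles partitions exactly `F`. -/
def Tiling.BeginsWith {S : RelCplx W} {N : ℕ} (T : Tiling S N)
    (F : Finset (Finset W)) : Prop :=
  ∃ p ≤ N, T.prefixFaces p = F

/-- A Morse tiling: all tiles are Morse tiles. -/
def Tiling.IsMorse {S : RelCplx W} {N : ℕ} (T : Tiling S N) : Prop :=
  ∀ i, ∃ n k, IsMorseTile (T.tile i) n k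

/-- An h-tiling: all tiles are basic or critical tiles. -/
def Tiling.IsH {S : RelCplx W} {N : ℕ} (T : Tiling S N) : Prop :=
  ∀ i, (∃ n k, IsBasicTile (T.tile i) n k) ∨ (∃ n k, IsCriticalTile (T.tile i) n k)

/-- `f` induces a simplicial isomorphism from `A` onto `B` (both viewed through
their collections of faces). -/
def IsSimplicialIso (f : V → W) (A : Finset (Finset V)) (B : Finset (Finset W)) : Prop :=
  Set.BijOn (fun σ : Finset V => σ.image f) ↑A ↑B

/-- `f` induces an isomorphism of relative simplicial complexes. -/
def IsRelIso (f : V → W) (S : RelCplx V) (S' : RelCplx W) : Prop :=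
  Set.BijOn (fun σ : Finset V => σ.image f) ↑S.K ↑S'.K ∧
    Set.BijOn (fun σ : Finset V => σ.image f) ↑S.L ↑S'.L

/-- The first derived neighborhood `N(L, K)` of a subcomplex `L` in `K` : the union
of the stars in `sd K` of the vertices of `L`. -/
def derivedNbhd (L K : Finset (Finset V)) : Finset (Finset (Finset V)) :=
  (L.filter fun s => s.card = 1).biUnion fun s => star (sd K) {s}

/-- The faces of the derived neighborhood `N(T, S)` of a tile `T` in a relative
complex `S`: the union of the relative stars in `sd S` of the vertices of `T`. -/
def relDerivedNbhd (T S : RelCplx V) : Finset (Finset (Finset V)) :=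
  ((suppK T).biUnion fun v => ((S.sdR).starR {({v} : Finset V)}).faces) ∩ (S.sdR).faces

/-- A discrete Morse function on the finite simplicial complex `K`. -/
def IsDiscreteMorse (K : Finset (Finset V)) (f : Finset V → ℝ) : Prop :=
  ∀ σ ∈ K, σ ≠ ∅ →
    (K.filter fun τ => σ ⊂ τ ∧ f τ ≤ f σ).card ≤ 1 ∧
    (K.filter fun θ => θ ≠ ∅ ∧ θ ⊂ σ ∧ f σ ≤ f θ).card ≤ 1

/-- A critical face of a discrete Morse function. -/
def IsCriticalFace (K : Finset (Finset V)) (f : Finset V → ℝ) (σ : Finset V) : Prop :=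
  σ ∈ K ∧ σ ≠ ∅ ∧ (∀ τ ∈ K, σ ⊂ τ → f σ < f τ) ∧
    ∀ θ ∈ K, θ ≠ ∅ → θ ⊂ σ → f θ < f σ

/-- An elementary collapse: removal of a facet `τ` together with a ridge `θ` of it
contained in no other facet. -/
def ElementaryCollapse (K K' : Finset (Finset V)) : Prop :=
  ∃ τ ∈ K, ∃ θ ∈ K, θ ⊆ τ ∧ τ.card = θ.card + 1 ∧
    (∀ ρ ∈ K, τ ⊆ ρ → ρ = τ) ∧
    (∀ ρ ∈ K, θ ⊆ ρ → ρ = θ ∨ ρ = τ) ∧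
    K' = (K.erase τ).erase θ

/-- A finite simplicial complex is collapsible when some finite sequence of
elementary collapses reduces it to a single vertex. -/
def Collapsible (K : Finset (Finset V)) : Prop :=
  ∃ v : V, Relation.ReflTransGen ElementaryCollapse K {∅, {v}}

/-!
Every nonempty flag of `sd (K \ L)` has a least member `ρ₀ ≠ ∅`; for any vertex `v ∈ ρ₀`
the flag extended by `v̂` is still a flag, so it lies in the star of `v̂`. Conversely, since
the missing part `L` is a subcomplex, a flag of `sd L` whose members all contain `v` forces
`{v} ∈ L`, so the relative star of `v̂` never meets `sd L`. The missing faces of the Morse tile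
`σ * θ̊ * τ̇` form a union of joins of complexes, hence a subcomplex.
-/

section Complexes

variable {V : Type*}

lemma isComplex_powerset (s : Finset V) : IsComplex s.powerset := fun _ hρ _ hτ =>
  Finset.mem_powerset.2 (hτ.trans (Finset.mem_powerset.1 hρ))

lemma isComplex_empty : IsComplex (∅ : Finset (Finset V)) := fun _ h =>
  absurd h (Finset.notMem_empty _)

lemma isComplex_singleton_empty : IsComplex ({∅} : Finset (Finset V)) := by
  intro ρ hρ τ hτ
  rw [Finset.mem_singleton] at hρ ⊢
  exact Finset.subset_empty.1 (hρ ▸ hτ)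

variable [DecidableEq V]

lemma isComplex_powerset_erase_self (s : Finset V) : IsComplex (s.powerset.erase s) := by
  intro ρ hρ τ hτ
  obtain ⟨hρs, hρ⟩ := Finset.mem_erase.1 hρ
  have hρs' : ρ ⊂ s := Finset.ssubset_iff_subset_ne.2 ⟨Finset.mem_powerset.1 hρ, hρs⟩
  exact Finset.mem_erase.2 ⟨(hτ.trans_ssubset hρs').ne, Finset.mem_powerset.2 (hτ.trans hρs'.1)⟩

lemma IsComplex.union {K₁ K₂ : Finset (Finset V)} (h₁ : IsComplex K₁) (h₂ : IsComplex K₂) :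
    IsComplex (K₁ ∪ K₂) := by
  intro ρ hρ τ hτ
  rcases Finset.mem_union.1 hρ with hρ | hρ
  · exact Finset.mem_union_left _ (h₁ ρ hρ τ hτ)
  · exact Finset.mem_union_right _ (h₂ ρ hρ τ hτ)

lemma mem_joinF {K₁ K₂ : Finset (Finset V)} {ρ : Finset V} :
    ρ ∈ joinF K₁ K₂ ↔ ∃ a ∈ K₁, ∃ b ∈ K₂, a ∪ b = ρ := by
  simp [joinF, and_assoc]

lemma IsComplex.joinF {K₁ K₂ : Finset (Finset V)} (h₁ : IsComplex K₁) (h₂ : IsComplex K₂) :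
    IsComplex (joinF K₁ K₂) := by
  intro ρ hρ τ hτ
  obtain ⟨a, ha, b, hb, rfl⟩ := mem_joinF.1 hρ
  refine mem_joinF.2 ⟨τ ∩ a, h₁ a ha _ Finset.inter_subset_right,
    τ ∩ b, h₂ b hb _ Finset.inter_subset_right, ?_⟩
  rw [← Finset.inter_union_distrib_left, Finset.inter_eq_left.2 hτ]

lemma joinF_powerset (s t : Finset V) : joinF s.powerset t.powerset = (s ∪ t).powerset := by
  ext ρ
  simp only [mem_joinF, Finset.mem_powerset]
  constructor
  · rintro ⟨a, ha, b, hb, rfl⟩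
    exact Finset.union_subset_union ha hb
  · intro h
    refine ⟨ρ ∩ s, Finset.inter_subset_right, ρ ∩ t, Finset.inter_subset_right, ?_⟩
    rw [← Finset.inter_union_distrib_left, Finset.inter_eq_left.2 h]

lemma RelCplx.isComplex_join_L {S₁ S₂ : RelCplx V} (h₁K : IsComplex S₁.K)
    (h₁L : IsComplex S₁.L) (h₂K : IsComplex S₂.K) (h₂L : IsComplex S₂.L) :
    IsComplex (S₁.join S₂).L :=
  (h₁L.joinF h₂K).union (h₁K.joinF h₂L)

lemma splitTile_K (σ θ τ : Finset V) : (splitTile σ θ τ).K = (σ ∪ θ ∪ τ).powerset := by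
  rw [Finset.union_assoc, ← joinF_powerset, ← joinF_powerset]
  rfl

lemma isComplex_splitTile_L (σ θ τ : Finset V) : IsComplex (splitTile σ θ τ).L := by
  have hdot : IsComplex (dotT τ).L := by
    unfold dotT
    split_ifs
    · exact isComplex_empty
    · exact isComplex_singleton_empty
  refine RelCplx.isComplex_join_L (isComplex_powerset σ) isComplex_empty
    ((isComplex_powerset θ).joinF (isComplex_powerset τ)) ?_
  exact RelCplx.isComplex_join_L (isComplex_powerset θ) (isComplex_powerset_erase_self θ)
    (isComplex_powerset τ) hdot

lemma mem_sd {K : Finset (Finset V)} {c : Finset (Finset V)} :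
    c ∈ sd K ↔ K ≠ ∅ ∧ (∀ ρ ∈ c, ρ ∈ K ∧ ρ ≠ ∅) ∧ ∀ a ∈ c, ∀ b ∈ c, a ⊆ b ∨ b ⊆ a := by
  unfold sd
  split_ifs with h
  · simp [h]
  · simp only [Finset.mem_filter, Finset.mem_powerset, Finset.subset_iff, Finset.mem_erase,
      ne_eq, h, not_false_eq_true, true_and]
    exact and_congr_left' (forall₂_congr fun _ _ => and_comm)

lemma exists_least_of_mem_sd {K : Finset (Finset V)} {c : Finset (Finset V)} (hc : c ∈ sd K)
    (hne : c.Nonempty) : ∃ ρ₀ ∈ c, ∀ ρ ∈ c, ρ₀ ⊆ ρ := by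
  obtain ⟨ρ₀, hρ₀, hmin⟩ := Finset.exists_min_image c Finset.card hne
  refine ⟨ρ₀, hρ₀, fun ρ hρ => ?_⟩
  rcases (mem_sd.1 hc).2.2 ρ₀ hρ₀ ρ hρ with h | h
  · exact h
  · rw [Finset.eq_of_subset_of_card_le h (hmin ρ hρ)]

lemma singleton_union_mem_sd_iff {K : Finset (Finset V)} {c : Finset (Finset V)} {v : V} :
    {{v}} ∪ c ∈ sd K ↔ c ∈ sd K ∧ {v} ∈ K ∧ ∀ ρ ∈ c, v ∈ ρ := by
  have hc : c ⊆ {{v}} ∪ c := Finset.subset_union_right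
  have hv : {v} ∈ {{v}} ∪ c := Finset.mem_union_left _ (Finset.mem_singleton_self _)
  constructor
  · intro h
    obtain ⟨hK, hmem, hchain⟩ := mem_sd.1 h
    refine ⟨mem_sd.2 ⟨hK, fun ρ hρ => hmem ρ (hc hρ),
      fun a ha b hb => hchain a (hc ha) b (hc hb)⟩, (hmem _ hv).1, fun ρ hρ => ?_⟩
    rcases hchain _ hv ρ (hc hρ) with h | h
    · exact Finset.singleton_subset_iff.1 h
    · rcases Finset.subset_singleton_iff.1 h with h | h
      · exact absurd h (hmem ρ (hc hρ)).2
      · exact h ▸ Finset.mem_singleton_self v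
  · rintro ⟨hcK, hvK, hvc⟩
    obtain ⟨hK, hmem, hchain⟩ := mem_sd.1 hcK
    have hcomparable : ∀ ρ ∈ c, {v} ⊆ ρ := fun ρ hρ => Finset.singleton_subset_iff.2 (hvc ρ hρ)
    refine mem_sd.2 ⟨hK, fun ρ hρ => ?_, fun a ha b hb => ?_⟩
    · rcases Finset.mem_union.1 hρ with h | h
      · exact Finset.mem_singleton.1 h ▸ ⟨hvK, Finset.singleton_ne_empty v⟩
      · exact hmem ρ h
    · rw [Finset.mem_union, Finset.mem_singleton] at ha hb
      rcases ha with rfl | ha <;> rcases hb with rfl | hb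
      · exact Or.inl subset_rfl
      · exact Or.inl (hcomparable b hb)
      · exact Or.inr (hcomparable a ha)
      · exact hchain a ha b hb

lemma mem_starR_sdR_faces {S : RelCplx V} {c : Finset (Finset V)} {v : V} :
    c ∈ (S.sdR.starR {{v}}).faces ↔
      c ∈ sd S.K ∧ ({v} ∈ S.K ∧ ∀ ρ ∈ c, v ∈ ρ) ∧
        ¬(c ∈ sd S.L ∧ {v} ∈ S.L ∧ ∀ ρ ∈ c, v ∈ ρ) := by
  simp only [RelCplx.faces, RelCplx.starR, RelCplx.sdR, star, Finset.mem_sdiff,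
    Finset.mem_filter, singleton_union_mem_sd_iff]
  tauto

theorem RelCplx.sdR_faces_erase_empty_eq_biUnion_starR {S : RelCplx V} (hK : IsComplex S.K)
    (hL : IsComplex S.L) {U : Finset V} (hU : ∀ ρ ∈ S.K, ρ ⊆ U) :
    S.sdR.faces.erase ∅ = (U.biUnion fun v => (S.sdR.starR {{v}}).faces).erase ∅ := by
  ext c
  simp only [Finset.mem_erase, Finset.mem_biUnion, mem_starR_sdR_faces]
  simp only [RelCplx.faces, RelCplx.sdR, Finset.mem_sdiff, and_congr_right_iff]
  intro hc
  obtain ⟨ρ₁, hρ₁⟩ := Finset.nonempty_iff_ne_empty.2 hc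
  constructor
  · rintro ⟨hcK, hcL⟩
    obtain ⟨ρ₀, hρ₀, hleast⟩ := exists_least_of_mem_sd hcK ⟨ρ₁, hρ₁⟩
    obtain ⟨hρ₀K, hρ₀ne⟩ := (mem_sd.1 hcK).2.1 ρ₀ hρ₀
    obtain ⟨v, hv⟩ := Finset.nonempty_iff_ne_empty.2 hρ₀ne
    exact ⟨v, hU ρ₀ hρ₀K hv, hcK,
      ⟨hK ρ₀ hρ₀K _ (Finset.singleton_subset_iff.2 hv), fun ρ hρ => hleast ρ hρ hv⟩,
      fun h => hcL h.1⟩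
  · rintro ⟨v, -, hcK, ⟨-, hvc⟩, hnot⟩
    refine ⟨hcK, fun hcL => hnot ⟨hcL, ?_, hvc⟩⟩
    exact hL ρ₁ ((mem_sd.1 hcL).2.1 ρ₁ hρ₁).1 _ (Finset.singleton_subset_iff.2 (hvc ρ₁ hρ₁))

end Complexes

theorem sd_of_morse_tile_eq_union_of_stars_general
    {V : Type*} [DecidableEq V] (σ θ τ : Finset V) :
    (((splitTile σ θ τ).sdR).faces).erase ∅ =
      ((σ ∪ θ ∪ τ).biUnion fun v =>
        (((splitTile σ θ τ).sdR).starR {({v} : Finset V)}).faces).erase ∅ :=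
  RelCplx.sdR_faces_erase_empty_eq_biUnion_starR
    (splitTile_K σ θ τ ▸ isComplex_powerset _) (isComplex_splitTile_L σ θ τ)
    (fun _ hρ => Finset.mem_powerset.1 (splitTile_K σ θ τ ▸ hρ))

/-- **Corollary.** If the Morse tile `T = σ * θ̊ * τ̇` is not reduced to `τ̇`, then
`sd T` is the union of the stars `st_{sd T}(v̂)` over the vertices `v` of the
underlying simplex `σ * θ * τ` (an equality of the sets of nonempty faces). -/
theorem sd_of_morse_tile_eq_union_of_stars
    {V : Type*} [DecidableEq V] (σ θ τ : Finset V)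
    (h₁ : Disjoint σ θ) (h₂ : Disjoint σ τ) (h₃ : Disjoint θ τ)
    (hdim : τ = ∅ ∨ 2 ≤ τ.card) (hne : (σ ∪ θ).Nonempty) :
    (((splitTile σ θ τ).sdR).faces).erase ∅ =
      ((σ ∪ θ ∪ τ).biUnion fun v =>
        (((splitTile σ θ τ).sdR).starR {({v} : Finset V)}).faces).erase ∅ :=
  sd_of_morse_tile_eq_union_of_stars_general σ θ τ

end MorseShelling
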